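/- Let q > 0 and set p = r = q/(1+q). Then the Jacobian A of the Maasch–Saltzman system at P₀ = (0,0,0), namely A = [[−1, −1, 0], [0, q/(1+q), −q/(1+q)], [−q, 0, −q]], has characteristic polynomial λ² (λ + 1 + q − q/(1+q)); thus its eigenvalues are 0 with algebraic multiplicity two and λ₃ = −(1 + q − q/(1+q)) < 0. Moreover A has rank two, so the kernel of A is one-dimensional and the zero eigenvalue has geometric multiplicity one. Hence Q₀ = (q/(1+q), q/(1+q)) is a Bogdanov–Takens point of P₀ for the full three-dimensional model. -/

import Mathlib

/-!
Expanding `det (X - A)` along the first row gives `(X + 1)(X - r)(X + q) + p q`. For `p = r = a`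
with `a (1 + q) = q` the constant and linear coefficients cancel, leaving `X² (X + 1 + q - a)`.
Since `a ≠ 0` and `q ≠ 0`, the second and third rows of `A v = 0` force `v₁ = v₂ = -v₀`, so the
kernel is the line through `(-1, 1, 1)` and rank–nullity gives rank two.
-/

open Matrix Polynomial

def maaschSaltzmanJacobian {R : Type*} [Ring R] (p q r : R) : Matrix (Fin 3) (Fin 3) R :=
  !![-1, -1, 0; 0, r, -p; -q, 0, -q]

theorem Matrix.rank_add_finrank_ker_mulVecLin {K m n : Type*} [Field K] [Fintype m] [Fintype n]
    (A : Matrix m n K) :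
    A.rank + Module.finrank K (LinearMap.ker A.mulVecLin) = Fintype.card n := by
  rw [Matrix.rank, LinearMap.finrank_range_add_finrank_ker, Module.finrank_fintype_fun_eq_card]

section
variable {R : Type*} [CommRing R]

theorem charpoly_maaschSaltzmanJacobian (p q r : R) :
    (maaschSaltzmanJacobian p q r).charpoly = (X + 1) * (X - C r) * (X + C q) + C (p * q) := by
  rw [Matrix.charpoly, Matrix.det_fin_three]
  simp [maaschSaltzmanJacobian]

theorem charpoly_maaschSaltzmanJacobian_of_mul_one_add_eq {a q : R} (h : a * (1 + q) = q) :
    (maaschSaltzmanJacobian a q a).charpoly = X ^ 2 * (X + C (1 + q - a)) := by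
  rw [charpoly_maaschSaltzmanJacobian]
  have hC : C a + C a * C q = C q := by rw [← C_mul, ← C_add, ← mul_one_add, h]
  simp only [C_mul, C_sub, C_add, C_1]
  linear_combination (-X) * hC
end

section
variable {K : Type*} [Field K] {a q : K}

theorem maaschSaltzmanJacobian_mulVec_eq_zero_iff (ha : a ≠ 0) (hq : q ≠ 0) (v : Fin 3 → K) :
    maaschSaltzmanJacobian a q a *ᵥ v = 0 ↔ ∃ c : K, c • ![-1, 1, 1] = v := by
  constructor
  · intro hv
    have h1 := congrFun hv 1
    have h2 := congrFun hv 2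
    simp only [mulVec, dotProduct, maaschSaltzmanJacobian, Fin.isValue, of_apply, cons_val',
      cons_val_fin_one, cons_val_one, cons_val_zero, Fin.sum_univ_three, zero_mul, zero_add,
      cons_val, neg_mul, Pi.zero_apply, add_zero] at h1 h2
    have hv2 : v 2 = v 1 := mul_left_cancel₀ ha (by linear_combination -h1)
    have hv0 : v 0 = -v 1 := mul_left_cancel₀ hq (by linear_combination -h2 - q * hv2)
    refine ⟨v 1, ?_⟩
    ext i
    fin_cases i <;> simp [hv0, hv2]
  · rintro ⟨c, rfl⟩
    ext i
    fin_cases i <;> simp [maaschSaltzmanJacobian, mulVec, dotProduct, Fin.sum_univ_three]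

theorem ker_mulVecLin_maaschSaltzmanJacobian (ha : a ≠ 0) (hq : q ≠ 0) :
    LinearMap.ker (maaschSaltzmanJacobian a q a).mulVecLin = K ∙ ![-1, 1, 1] := by
  ext v
  rw [LinearMap.mem_ker, mulVecLin_apply, Submodule.mem_span_singleton,
    maaschSaltzmanJacobian_mulVec_eq_zero_iff ha hq]

theorem finrank_ker_mulVecLin_maaschSaltzmanJacobian (ha : a ≠ 0) (hq : q ≠ 0) :
    Module.finrank K (LinearMap.ker (maaschSaltzmanJacobian a q a).mulVecLin) = 1 := by
  rw [ker_mulVecLin_maaschSaltzmanJacobian ha hq, finrank_span_singleton]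
  intro h
  simpa using congrFun h 1

theorem rank_maaschSaltzmanJacobian (ha : a ≠ 0) (hq : q ≠ 0) :
    (maaschSaltzmanJacobian a q a).rank = 2 := by
  have := (maaschSaltzmanJacobian a q a).rank_add_finrank_ker_mulVecLin
  rw [finrank_ker_mulVecLin_maaschSaltzmanJacobian ha hq, Fintype.card_fin] at this
  omega
end

/-- Bogdanov–Takens point `Q₀ = (q/(1+q), q/(1+q))` of the equilibrium `P₀`
of the full three-dimensional Maasch–Saltzman system: for `p = r = q/(1+q)`
the Jacobian `A = [[−1,−1,0],[0,q/(1+q),−q/(1+q)],[−q,0,−q]]` at `P₀` has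
characteristic polynomial `λ²(λ + 1 + q − q/(1+q))`, i.e. a double zero
eigenvalue together with the negative eigenvalue `λ₃ = −(1 + q − q/(1+q))`;
moreover `A` has rank two, so the zero eigenvalue has geometric multiplicity
one. -/
theorem BT_point_Q0_full_system (q : ℝ) (hq : 0 < q)
    (A : Matrix (Fin 3) (Fin 3) ℝ)
    (hA : A = !![-1, -1, 0;
                 0, q / (1 + q), -(q / (1 + q));
                 -q, 0, -q]) :
    A.charpoly = X ^ 2 * (X + C (1 + q - q / (1 + q))) ∧
    -(1 + q - q / (1 + q)) < 0 ∧
    A.rank = 2 ∧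
    Module.finrank ℝ (LinearMap.ker A.mulVecLin) = 1 := by
  set a := q / (1 + q)
  have hA' : A = maaschSaltzmanJacobian a q a := hA
  have ha : a * (1 + q) = q := div_mul_cancel₀ q (by positivity)
  have ha₀ : a ≠ 0 := by positivity
  have ha₁ : a < 1 := (div_lt_one (by positivity)).2 (by linarith)
  subst hA'
  exact ⟨charpoly_maaschSaltzmanJacobian_of_mul_one_add_eq ha, by linarith,
    rank_maaschSaltzmanJacobian ha₀ hq.ne', finrank_ker_mulVecLin_maaschSaltzmanJacobian ha₀ hq.ne'⟩
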